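/- The n-sided I-patch interpolates all ribbon-bounding intersections: let R₁,…,Rₙ, B₁,…,Bₙ : ℝ² → ℝ be differentiable functions, w₀, w₁,…,wₙ ∈ ℝ, and I = Σᵢ wᵢ·Rᵢ·Πⱼ≠ᵢ Bⱼ² + w₀·Πⱼ Bⱼ². If p ∈ ℝ² satisfies Rₖ(p) = 0 and Bₖ(p) = 0 for some index k, then I(p) = 0 and ∇I(p) = wₖ·(Πⱼ≠ₖ Bⱼ(p)²)·∇Rₖ(p). -/

import Mathlib

open Finset

/-! Every summand of `I` other than the `k`-th, and the `w₀`-term, contains the factor `Bₖ²`,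
which vanishes to second order at `p` since `Bₖ(p) = 0`; so their sum contributes neither to
`I(p)` nor to `∇I(p)`. The `k`-th summand `wₖ Rₖ Πⱼ≠ₖ Bⱼ²` vanishes at `p` because `Rₖ(p) = 0`,
and by the Leibniz rule only the term `(wₖ Πⱼ≠ₖ Bⱼ(p)²) ∇Rₖ(p)` of its gradient survives. -/

section SecondOrder

variable {E : Type*} [NormedAddCommGroup E] [NormedSpace ℝ E] {f g : E → ℝ} {p : E}

def VanishesToSecondOrderAt (f : E → ℝ) (p : E) : Prop :=
  f p = 0 ∧ HasFDerivAt f (0 : E →L[ℝ] ℝ) p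

theorem HasFDerivAt.mul_of_eq_zero_left {f' g' : E →L[ℝ] ℝ} (hf : HasFDerivAt f f' p)
    (hg : HasFDerivAt g g' p) (hfp : f p = 0) :
    HasFDerivAt (fun q => f q * g q) (g p • f') p := by
  simpa [hfp] using hf.fun_mul hg

namespace VanishesToSecondOrderAt

theorem sq (hf : DifferentiableAt ℝ f p) (hfp : f p = 0) :
    VanishesToSecondOrderAt (fun q => f q ^ 2) p := by
  refine ⟨by simp [hfp], ?_⟩
  simpa [hfp] using hf.hasFDerivAt.pow 2

theorem mul_left (hg : VanishesToSecondOrderAt g p) (hf : DifferentiableAt ℝ f p) :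
    VanishesToSecondOrderAt (fun q => f q * g q) p := by
  refine ⟨by simp [hg.1], ?_⟩
  simpa [hg.1] using hf.hasFDerivAt.fun_mul hg.2

theorem mul_right (hf : VanishesToSecondOrderAt f p) (hg : DifferentiableAt ℝ g p) :
    VanishesToSecondOrderAt (fun q => f q * g q) p := by
  simpa only [mul_comm] using hf.mul_left hg

theorem sum {ι : Type*} {s : Finset ι} {F : ι → E → ℝ}
    (hF : ∀ i ∈ s, VanishesToSecondOrderAt (F i) p) :
    VanishesToSecondOrderAt (fun q => ∑ i ∈ s, F i q) p :=
  ⟨sum_eq_zero fun i hi => (hF i hi).1, by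
    simpa using HasFDerivAt.fun_sum fun i hi => (hF i hi).2⟩

theorem add (hf : VanishesToSecondOrderAt f p) (hg : VanishesToSecondOrderAt g p) :
    VanishesToSecondOrderAt (fun q => f q + g q) p :=
  ⟨by simp [hf.1, hg.1], by simpa using hf.2.fun_add hg.2⟩

theorem prod_sq {ι : Type*} [DecidableEq ι] {s : Finset ι} {B : ι → E → ℝ} {k : ι}
    (hB : ∀ j ∈ s, DifferentiableAt ℝ (B j) p) (hk : k ∈ s) (hBk : B k p = 0) :
    VanishesToSecondOrderAt (fun q => ∏ j ∈ s, B j q ^ 2) p := by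
  simp_rw [← mul_prod_erase s _ hk]
  exact (sq (hB k hk) hBk).mul_right
    (HasFDerivAt.finsetProd fun j hj =>
      ((hB j (mem_of_mem_erase hj)).pow 2).hasFDerivAt).differentiableAt

end VanishesToSecondOrderAt

end SecondOrder

/-- The n-sided I-patch interpolates all ribbon–bounding intersections: with
differentiable `R₁,…,Rₙ, B₁,…,Bₙ` and
`I = Σᵢ wᵢ·Rᵢ·Πⱼ≠ᵢ Bⱼ² + w₀·Πⱼ Bⱼ²`, if `Rₖ(p) = 0` and `Bₖ(p) = 0` then
`I(p) = 0` and `∇I(p) = wₖ·(Πⱼ≠ₖ Bⱼ(p)²)·∇Rₖ(p)`. -/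
theorem stmt_11
    (n : ℕ) (R B : Fin n → ℝ × ℝ → ℝ)
    (hR : ∀ i, Differentiable ℝ (R i)) (hB : ∀ i, Differentiable ℝ (B i))
    (w₀ : ℝ) (w : Fin n → ℝ)
    (I : ℝ × ℝ → ℝ)
    (hI : ∀ q, I q =
      ∑ i : Fin n, w i * R i q * ∏ j ∈ univ.erase i, (B j q) ^ 2
        + w₀ * ∏ j : Fin n, (B j q) ^ 2)
    (k : Fin n) (p : ℝ × ℝ) (hRk : R k p = 0) (hBk : B k p = 0) :
    I p = 0 ∧
    fderiv ℝ I p = (w k * ∏ j ∈ univ.erase k, (B j p) ^ 2) • fderiv ℝ (R k) p := by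
  set P : ℝ × ℝ → ℝ := fun q => ∏ j ∈ univ.erase k, (B j q) ^ 2
  have hP : DifferentiableAt ℝ P p :=
    (HasFDerivAt.finsetProd fun j _ => ((hB j p).pow 2).hasFDerivAt).differentiableAt
  have hsplit : I = fun q => w k * R k q * P q +
      (∑ i ∈ univ.erase k, w i * R i q * ∏ j ∈ univ.erase i, (B j q) ^ 2
        + w₀ * ∏ j : Fin n, (B j q) ^ 2) := by
    funext q
    rw [hI, ← add_sum_erase _ _ (mem_univ k), add_assoc]
  have hrest : VanishesToSecondOrderAt (fun q =>
      ∑ i ∈ univ.erase k, w i * R i q * ∏ j ∈ univ.erase i, (B j q) ^ 2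
        + w₀ * ∏ j : Fin n, (B j q) ^ 2) p := by
    refine .add (.sum fun i hi => ?_) ?_
    · exact (VanishesToSecondOrderAt.prod_sq (fun j _ => hB j p)
        (mem_erase.2 ⟨(ne_of_mem_erase hi).symm, mem_univ k⟩) hBk).mul_left
        ((hR i p).const_mul (w i))
    · exact (VanishesToSecondOrderAt.prod_sq (fun j _ => hB j p) (mem_univ k) hBk).mul_left
        (differentiableAt_const w₀)
  have hmain : HasFDerivAt (fun q => w k * R k q * P q)
      ((w k * P p) • fderiv ℝ (R k) p) p := by
    simpa [smul_smul, mul_comm] using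
      ((hR k p).hasFDerivAt.const_mul (w k)).mul_of_eq_zero_left hP.hasFDerivAt (by simp [hRk])
  rw [hsplit]
  refine ⟨?_, (hmain.fun_add hrest.2).fderiv.trans (add_zero _)⟩
  simpa only [hRk, mul_zero, zero_mul, zero_add] using hrest.1
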